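/- (Error bound for federated policy improvement with federated policy evaluation.) Suppose each client n produces a policy π^{t+1}_n satisfying ‖T^{π^{t+1}_n}_n V̄^t − T_n V̄^t‖_∞ ≤ ε_n for the common value estimate V̄^t with ‖V̄^t‖_∞ ≤ R_max/(1−γ), and the aggregated policy is π^{t+1}(a|s) = ∑_n q_n π^{t+1}_n(a|s). Then ‖T^{π^{t+1}}_I V̄^t − T_I V̄^t‖_∞ ≤ 2γ R_max κ_1/(1−γ) + ∑_n q_n ε_n, where T_I, T^π_I are the Bellman operators of the imaginary MDP with kernel P̄ = ∑_n q_n P_n and κ_1 = ∑_n q_n κ_{n,I}. -/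

import Mathlib

open Finset Filter

variable {S A : Type*}

/-- A stochastic policy: for each state, a probability distribution over actions. -/
def IsPolicy [Fintype A] (pi : S → A → ℝ) : Prop :=
  (∀ s a, 0 ≤ pi s a) ∧ ∀ s, ∑ a, pi s a = 1

/-- A transition kernel: for each state-action pair, a probability distribution over states. -/
def IsKernel [Fintype S] (P : S → A → S → ℝ) : Prop :=
  (∀ s a s', 0 ≤ P s a s') ∧ ∀ s a, ∑ s', P s a s' = 1

/-- The policy Bellman operator `T^π` for kernel `P`. -/
def Tpol [Fintype S] [Fintype A] (γ : ℝ) (R : S → A → ℝ) (P : S → A → S → ℝ)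
    (pi : S → A → ℝ) (V : S → ℝ) (s : S) : ℝ :=
  ∑ a, pi s a * (R s a + γ * ∑ s', P s a s' * V s')

/-- The Bellman optimality operator `T` for kernel `P`. -/
noncomputable def Topt [Fintype S] [Fintype A] [Nonempty A] (γ : ℝ) (R : S → A → ℝ)
    (P : S → A → S → ℝ) (V : S → ℝ) (s : S) : ℝ :=
  Finset.univ.sup' Finset.univ_nonempty fun a => R s a + γ * ∑ s', P s a s' * V s'

/-- Heterogeneity measure `κ_{m,n}`: the supremum over policies `π` and states `s` of the
ℓ¹-distance between the induced state transition kernels `P_m^π(·|s)` and `P_n^π(·|s)`. -/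
noncomputable def kappa [Fintype S] [Fintype A] (Pm Pn : S → A → S → ℝ) : ℝ :=
  sSup {x : ℝ | ∃ pi : S → A → ℝ, ∃ s : S, IsPolicy pi ∧
    x = ∑ s', |(∑ a, pi s a * Pm s a s') - ∑ a, pi s a * Pn s a s'|}

/-- Sup-norm of a value function on a finite state space. -/
noncomputable def supNorm [Fintype S] [Nonempty S] (V : S → ℝ) : ℝ := ⨆ s, |V s|

variable [Fintype S] [Fintype A] [Nonempty S] [Nonempty A]

/-! Averaging the client policies makes `T^{π^{t+1}}_I V̄ - T_I V̄` the `q`-average of the client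
gaps `T^{π_n}_I V̄ - T_I V̄`, so it suffices to bound each of these. Replacing the kernel `P̄` by `P_n`
moves both `T^{π_n} V̄` and `T V̄` by at most `γ ‖V̄‖_∞ κ_{n,I}`, since each is built from expectations
of `V̄` under `P̄` or `P_n`, and the optimality operator is a maximum of such expectations. Hence the
gap for `P̄` exceeds the client's own gap `ε_n` by at most `2 γ ‖V̄‖_∞ κ_{n,I}`. -/

section

variable {S A : Type*} [Fintype S]

lemma abs_le_supNorm [Nonempty S] (V : S → ℝ) (s : S) : |V s| ≤ supNorm V :=
  le_ciSup (Set.finite_range fun s => |V s|).bddAbove s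

lemma supNorm_le [Nonempty S] {V : S → ℝ} {c : ℝ} (h : ∀ s, |V s| ≤ c) : supNorm V ≤ c :=
  ciSup_le h

lemma Finset.sup'_le_sup'_add {ι : Type*} {s : Finset ι} (hs : s.Nonempty) {f g : ι → ℝ}
    {c : ℝ} (h : ∀ i ∈ s, f i ≤ g i + c) : s.sup' hs f ≤ s.sup' hs g + c :=
  Finset.sup'_le _ _ fun i hi => (h i hi).trans (by gcongr; exact Finset.le_sup' g hi)

lemma Finset.abs_sup'_sub_sup'_le {ι : Type*} {s : Finset ι} (hs : s.Nonempty) {f g : ι → ℝ}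
    {c : ℝ} (h : ∀ i ∈ s, |f i - g i| ≤ c) : |s.sup' hs f - s.sup' hs g| ≤ c := by
  rw [abs_sub_le_iff, sub_le_iff_le_add', sub_le_iff_le_add']
  constructor
  · exact Finset.sup'_le_sup'_add hs fun i hi => by linarith [(abs_sub_le_iff.1 (h i hi)).1]
  · exact Finset.sup'_le_sup'_add hs fun i hi => by linarith [(abs_sub_le_iff.1 (h i hi)).2]

lemma abs_sum_mul_sub_sum_mul_le {ι : Type*} [Fintype ι] (u u' v : ι → ℝ) {M : ℝ}
    (hv : ∀ i, |v i| ≤ M) :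
    |∑ i, u i * v i - ∑ i, u' i * v i| ≤ M * ∑ i, |u i - u' i| :=
  calc |∑ i, u i * v i - ∑ i, u' i * v i|
      = |∑ i, (u i - u' i) * v i| := by rw [← sum_sub_distrib]; simp only [sub_mul]
    _ ≤ ∑ i, |u i - u' i| * |v i| := by
        simpa only [abs_mul] using abs_sum_le_sum_abs (fun i => (u i - u' i) * v i) univ
    _ ≤ ∑ i, |u i - u' i| * M := by gcongr with i; exact hv i
    _ = M * ∑ i, |u i - u' i| := by rw [← sum_mul, mul_comm]

lemma abs_sum_mul_sub_le {ι : Type*} [Fintype ι] {q : ι → ℝ} (hq0 : ∀ i, 0 ≤ q i)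
    (hq1 : ∑ i, q i = 1) (x : ι → ℝ) (c : ℝ) :
    |∑ i, q i * x i - c| ≤ ∑ i, q i * |x i - c| :=
  calc |∑ i, q i * x i - c|
      = |∑ i, q i * (x i - c)| := by simp only [mul_sub, sum_sub_distrib, ← sum_mul, hq1, one_mul]
    _ ≤ ∑ i, |q i * (x i - c)| := abs_sum_le_sum_abs _ _
    _ = ∑ i, q i * |x i - c| := by simp only [abs_mul, abs_of_nonneg (hq0 _)]

lemma isKernel_mixture {ι : Type*} [Fintype ι] {q : ι → ℝ} (hq0 : ∀ i, 0 ≤ q i)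
    (hq1 : ∑ i, q i = 1) {P : ι → S → A → S → ℝ} (hP : ∀ i, IsKernel (P i)) :
    IsKernel fun s a s' => ∑ i, q i * P i s a s' := by
  refine ⟨fun s a s' => sum_nonneg fun i _ => mul_nonneg (hq0 i) ((hP i).1 s a s'), fun s a => ?_⟩
  rw [sum_comm]
  simp only [← mul_sum, (hP _).2, mul_one, hq1]

variable [Fintype A]

/-- The state-to-state kernel `P^π(s' | s)` induced by the policy `π`. -/
def policyKernel (P : S → A → S → ℝ) (pi : S → A → ℝ) (s s' : S) : ℝ :=
  ∑ a, pi s a * P s a s'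

lemma policyKernel_nonneg {P : S → A → S → ℝ} (hP : IsKernel P) {pi : S → A → ℝ}
    (hpi : IsPolicy pi) (s s' : S) : 0 ≤ policyKernel P pi s s' :=
  sum_nonneg fun a _ => mul_nonneg (hpi.1 s a) (hP.1 s a s')

lemma sum_policyKernel {P : S → A → S → ℝ} (hP : IsKernel P) {pi : S → A → ℝ}
    (hpi : IsPolicy pi) (s : S) : ∑ s', policyKernel P pi s s' = 1 := by
  simp only [policyKernel]
  rw [sum_comm]
  simp only [← mul_sum, hP.2, mul_one, hpi.2]

lemma le_kappa {Pm Pn : S → A → S → ℝ} (hm : IsKernel Pm) (hn : IsKernel Pn)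
    {pi : S → A → ℝ} (hpi : IsPolicy pi) (s : S) :
    ∑ s', |policyKernel Pm pi s s' - policyKernel Pn pi s s'| ≤ kappa Pm Pn := by
  refine le_csSup ⟨2, ?_⟩ ⟨pi, s, hpi, rfl⟩
  rintro x ⟨pi', s₀, hpi', rfl⟩
  calc ∑ s', |policyKernel Pm pi' s₀ s' - policyKernel Pn pi' s₀ s'|
      ≤ ∑ s', (policyKernel Pm pi' s₀ s' + policyKernel Pn pi' s₀ s') := by
        gcongr with s'
        refine (abs_sub _ _).trans_eq ?_
        rw [abs_of_nonneg (policyKernel_nonneg hm hpi' s₀ s'),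
          abs_of_nonneg (policyKernel_nonneg hn hpi' s₀ s')]
    _ = 2 := by rw [sum_add_distrib, sum_policyKernel hm hpi', sum_policyKernel hn hpi']; norm_num

lemma sum_abs_sub_le_kappa {Pm Pn : S → A → S → ℝ} (hm : IsKernel Pm) (hn : IsKernel Pn)
    (s : S) (a : A) : ∑ s', |Pm s a s' - Pn s a s'| ≤ kappa Pm Pn := by
  classical
  have hdet : IsPolicy fun (_ : S) a' => if a' = a then (1 : ℝ) else 0 :=
    ⟨fun _ _ => by dsimp only; split_ifs <;> norm_num, fun _ => by simp⟩
  simpa [policyKernel] using le_kappa hm hn hdet s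

lemma Tpol_eq (γ : ℝ) (R : S → A → ℝ) (P : S → A → S → ℝ) (pi : S → A → ℝ) (V : S → ℝ)
    (s : S) :
    Tpol γ R P pi V s = ∑ a, pi s a * R s a + γ * ∑ s', policyKernel P pi s s' * V s' := by
  simp only [Tpol, policyKernel, mul_add, sum_add_distrib, mul_sum, sum_mul]
  rw [sum_comm (s := univ) (t := univ) (f := fun a s' => pi s a * (γ * (P s a s' * V s')))]
  congr 1
  exact sum_congr rfl fun _ _ => sum_congr rfl fun _ _ => by ring

lemma Tpol_mixture {ι : Type*} [Fintype ι] (γ : ℝ) (R : S → A → ℝ) (P : S → A → S → ℝ)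
    (q : ι → ℝ) (pi : ι → S → A → ℝ) (V : S → ℝ) (s : S) :
    Tpol γ R P (fun s a => ∑ i, q i * pi i s a) V s = ∑ i, q i * Tpol γ R P (pi i) V s := by
  simp only [Tpol, sum_mul, mul_sum]
  rw [sum_comm]
  exact sum_congr rfl fun _ _ => sum_congr rfl fun _ _ => by ring

variable {γ M : ℝ} {R : S → A → ℝ} {P P' : S → A → S → ℝ} {V : S → ℝ}

lemma abs_Tpol_sub_Tpol_le (hP : IsKernel P) (hP' : IsKernel P') {pi : S → A → ℝ}
    (hpi : IsPolicy pi) (hγ : 0 ≤ γ) (hV : ∀ s, |V s| ≤ M) (s : S) :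
    |Tpol γ R P pi V s - Tpol γ R P' pi V s| ≤ γ * M * kappa P P' := by
  have hM : 0 ≤ M := (abs_nonneg _).trans (hV s)
  rw [Tpol_eq, Tpol_eq, add_sub_add_left_eq_sub, ← mul_sub, abs_mul, abs_of_nonneg hγ, mul_assoc]
  gcongr
  exact (abs_sum_mul_sub_sum_mul_le _ _ V hV).trans
    (mul_le_mul_of_nonneg_left (le_kappa hP hP' hpi s) hM)

lemma abs_Topt_sub_Topt_le [Nonempty A] (hP : IsKernel P) (hP' : IsKernel P') (hγ : 0 ≤ γ)
    (hV : ∀ s, |V s| ≤ M) (s : S) :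
    |Topt γ R P V s - Topt γ R P' V s| ≤ γ * M * kappa P P' := by
  have hM : 0 ≤ M := (abs_nonneg _).trans (hV s)
  refine Finset.abs_sup'_sub_sup'_le _ fun a _ => ?_
  rw [add_sub_add_left_eq_sub, ← mul_sub, abs_mul, abs_of_nonneg hγ, mul_assoc]
  gcongr
  exact (abs_sum_mul_sub_sum_mul_le _ _ V hV).trans
    (mul_le_mul_of_nonneg_left (sum_abs_sub_le_kappa hP hP' s a) hM)

lemma abs_Tpol_sub_Topt_le_of_kernel_change [Nonempty A] (hP : IsKernel P) (hP' : IsKernel P')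
    {pi : S → A → ℝ} (hpi : IsPolicy pi) (hγ : 0 ≤ γ) (hV : ∀ s, |V s| ≤ M) {s : S} {ε : ℝ}
    (hε : |Tpol γ R P pi V s - Topt γ R P V s| ≤ ε) :
    |Tpol γ R P' pi V s - Topt γ R P' V s| ≤ 2 * γ * M * kappa P P' + ε :=
  calc |Tpol γ R P' pi V s - Topt γ R P' V s|
      ≤ |Tpol γ R P pi V s - Tpol γ R P' pi V s| + |Tpol γ R P pi V s - Topt γ R P V s|
        + |Topt γ R P V s - Topt γ R P' V s| := by
        rw [abs_sub_comm (Tpol γ R P pi V s), add_assoc]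
        refine (abs_sub_le _ (Tpol γ R P pi V s) _).trans ?_
        gcongr
        exact abs_sub_le _ _ _
    _ ≤ γ * M * kappa P P' + ε + γ * M * kappa P P' := by
        gcongr
        exacts [abs_Tpol_sub_Tpol_le hP hP' hpi hγ hV s, abs_Topt_sub_Topt_le hP hP' hγ hV s]
    _ = 2 * γ * M * kappa P P' + ε := by ring

end

theorem stmt8_general (N : ℕ) (γ Rmax : ℝ) (hγ0 : 0 < γ)
    (R : S → A → ℝ)
    (q : Fin N → ℝ) (hq0 : ∀ n, 0 ≤ q n) (hq1 : ∑ n, q n = 1)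
    (P : Fin N → S → A → S → ℝ) (hP : ∀ n, IsKernel (P n))
    (Pbar : S → A → S → ℝ) (hPbar : ∀ s a s', Pbar s a s' = ∑ j, q j * P j s a s')
    (Vbar : S → ℝ) (hVbar : supNorm Vbar ≤ Rmax / (1 - γ))
    (pinext : Fin N → S → A → ℝ) (hpinext : ∀ n, IsPolicy (pinext n))
    (ε : Fin N → ℝ)
    (hε : ∀ n, supNorm (fun s => Tpol γ R (P n) (pinext n) Vbar s - Topt γ R (P n) Vbar s) ≤ ε n)
    (piagg : S → A → ℝ) (hpiagg : ∀ s a, piagg s a = ∑ n, q n * pinext n s a) :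
    supNorm (fun s => Tpol γ R Pbar piagg Vbar s - Topt γ R Pbar Vbar s) ≤
      2 * γ * Rmax * (∑ n, q n * kappa (P n) Pbar) / (1 - γ) + ∑ n, q n * ε n := by
  obtain rfl : Pbar = fun s a s' => ∑ j, q j * P j s a s' := funext fun s => funext fun a =>
    funext (hPbar s a)
  obtain rfl : piagg = fun s a => ∑ n, q n * pinext n s a := funext fun s => funext (hpiagg s)
  have hV s : |Vbar s| ≤ Rmax / (1 - γ) := (abs_le_supNorm Vbar s).trans hVbar
  refine supNorm_le fun s => ?_
  have hclient n := abs_Tpol_sub_Topt_le_of_kernel_change (hP n) (isKernel_mixture hq0 hq1 hP)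
    (hpinext n) hγ0.le hV ((abs_le_supNorm _ s).trans (hε n))
  calc |Tpol γ R _ _ Vbar s - Topt γ R _ Vbar s|
      ≤ ∑ n, q n * |Tpol γ R _ (pinext n) Vbar s - Topt γ R _ Vbar s| := by
        rw [Tpol_mixture]; exact abs_sum_mul_sub_le hq0 hq1 _ _
    _ ≤ ∑ n, q n * (2 * γ * (Rmax / (1 - γ)) * kappa (P n) _ + ε n) := by
        gcongr with n; exacts [hq0 n, hclient n]
    _ = _ := by
        simp only [mul_add, sum_add_distrib, mul_sum, sum_div]
        exact congrArg (· + _) (sum_congr rfl fun _ _ => by ring)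

theorem stmt8 (N : ℕ) (γ Rmax : ℝ) (hγ0 : 0 < γ) (hγ1 : γ < 1)
    (R : S → A → ℝ) (hR : ∀ s a, 0 ≤ R s a ∧ R s a ≤ Rmax)
    (q : Fin N → ℝ) (hq0 : ∀ n, 0 ≤ q n) (hq1 : ∑ n, q n = 1)
    (P : Fin N → S → A → S → ℝ) (hP : ∀ n, IsKernel (P n))
    (Pbar : S → A → S → ℝ) (hPbar : ∀ s a s', Pbar s a s' = ∑ j, q j * P j s a s')
    (Vbar : S → ℝ) (hVbar : supNorm Vbar ≤ Rmax / (1 - γ))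
    (pinext : Fin N → S → A → ℝ) (hpinext : ∀ n, IsPolicy (pinext n))
    (ε : Fin N → ℝ)
    (hε : ∀ n, supNorm (fun s => Tpol γ R (P n) (pinext n) Vbar s - Topt γ R (P n) Vbar s) ≤ ε n)
    (piagg : S → A → ℝ) (hpiagg : ∀ s a, piagg s a = ∑ n, q n * pinext n s a) :
    supNorm (fun s => Tpol γ R Pbar piagg Vbar s - Topt γ R Pbar Vbar s) ≤
      2 * γ * Rmax * (∑ n, q n * kappa (P n) Pbar) / (1 - γ) + ∑ n, q n * ε n :=
  stmt8_general N γ Rmax hγ0 R q hq0 hq1 P hP Pbar hPbar Vbar hVbar pinext hpinext ε hε piagg hpiagg
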